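/- arXiv:2505.04328 — 3 statements merged into one kernel-verified Lean document; each statement's English description precedes it below -/
import Mathlib

section
/- Let d, L, K ∈ ℕ, Δt > 0, z⁰ ∈ ℝ^d. Let a : ℝ^d × ℝ^L → ℝ^d and g : ℝ^d × ℝ^L → ℝ be continuously differentiable, and for each κ ∈ {0, …, K−1} let β^κ : ℝ^d → ℝ^d be continuously differentiable. For μ = (μ⁰, …, μ^{K−1}) ∈ (ℝ^L)^K define the states z^κ(μ) by the explicit Euler recursion z⁰(μ) = z⁰ and z^{κ+1}(μ) = z^κ(μ) + Δt·a(z^κ(μ), μ^κ) + β^κ(z^κ(μ)), and define the discrete cost J(μ) = Δt·Σ_{κ=0}^{K−1} g(z^κ(μ), μ^κ). Define the adjoint states backward by r^K = 0 and, for κ = K−1, …, 0, r^κ = r^{κ+1} + Δt·(D_z a(z^κ, μ^κ))^⊤ r^{κ+1} + (D β^κ(z^κ))^⊤ r^{κ+1} − Δt·∇_z g(z^κ, μ^κ), where D_z a denotes the Jacobian of a in its first argument, D β^κ the Jacobian of β^κ, ^⊤ the transpose, and ∇_z g the gradient of g in its first argument. Then J is differentiable and, for every κ ∈ {0, …, K−1},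 the partial gradient of J with respect to μ^κ is ∇_{μ^κ} J(μ) = Δt·∇_μ g(z^κ, μ^κ) − Δt·(D_μ a(z^κ, μ^κ))^⊤ r^{κ+1}, where D_μ a is the Jacobian of a in its second argument and ∇_μ g the gradient of g in its second argument. -/
/-
Differentiating the Euler recursion in a direction `e` of the controls gives the tangent
recursion `w^{κ+1} = M^κ w^κ + Δt·D_μ a·e^κ` with `M^κ = I + Δt·D_z a + Dβ^κ` and `w⁰ = 0`,
while the adjoint recursion reads `r^κ = (M^κ)^⊤ r^{κ+1} - Δt·∇_z g`. Hence
`⟪r^{κ+1}, w^{κ+1}⟫ - ⟪r^κ, w^κ⟫ = Δt⟪r^{κ+1}, D_μ a·e^κ⟫ + Δt⟪∇_z g, w^κ⟫`, and summing this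
telescoping identity (with `r^K = 0`, `w⁰ = 0`) eliminates the state sensitivities from
`DJ(μ)e = Δt Σ_κ (⟪∇_z g, w^κ⟫ + ⟪∇_μ g, e^κ⟫)`. What remains is
`DJ(μ)e = Σ_κ ⟪Δt·∇_μ g - Δt·(D_μ a)^⊤ r^{κ+1}, e^κ⟫`; taking `e` supported at a single `κ`
gives the partial gradient.
-/

section Calculus

open ContinuousLinearMap

variable {𝕜 E F G H : Type*} [NontriviallyNormedField 𝕜] [NormedAddCommGroup E] [NormedSpace 𝕜 E]
  [NormedAddCommGroup F] [NormedSpace 𝕜 F] [NormedAddCommGroup G] [NormedSpace 𝕜 G]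
  [NormedAddCommGroup H] [NormedSpace 𝕜 H]

theorem fderiv_comp_prodMk_apply {f : E × F → G} {ζ : H → E} {η : H → F} {x : H}
    (hf : DifferentiableAt 𝕜 f (ζ x, η x)) (hζ : DifferentiableAt 𝕜 ζ x)
    (hη : DifferentiableAt 𝕜 η x) (u : H) :
    fderiv 𝕜 (fun x' => f (ζ x', η x')) x u =
      fderiv 𝕜 (fun y => f (y, η x)) (ζ x) (fderiv 𝕜 ζ x u)
        + fderiv 𝕜 (fun y => f (ζ x, y)) (η x) (fderiv 𝕜 η x u) := by
  have hx : HasFDerivAt (fun x' => f (ζ x', η x'))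
      ((fderiv 𝕜 f (ζ x, η x)).comp ((fderiv 𝕜 ζ x).prod (fderiv 𝕜 η x))) x :=
    hf.hasFDerivAt.comp x (hζ.hasFDerivAt.prodMk hη.hasFDerivAt)
  have h₁ : HasFDerivAt (fun y => f (y, η x)) ((fderiv 𝕜 f (ζ x, η x)).comp (inl 𝕜 E F)) (ζ x) :=
    hf.hasFDerivAt.comp (ζ x) (hasFDerivAt_prodMk_left (ζ x) (η x))
  have h₂ : HasFDerivAt (fun y => f (ζ x, y)) ((fderiv 𝕜 f (ζ x, η x)).comp (inr 𝕜 E F)) (η x) :=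
    hf.hasFDerivAt.comp (η x) (hasFDerivAt_prodMk_right (ζ x) (η x))
  rw [hx.fderiv, h₁.fderiv, h₂.fderiv]
  simp only [comp_apply, prod_apply, inl_apply, inr_apply, ← map_add, Prod.mk_add_mk,
    add_zero, zero_add]

theorem fderiv_comp_update_apply {ι : Type*} [Fintype ι] [DecidableEq ι] {J : (ι → F) → G}
    {x : ι → F} (hJ : DifferentiableAt 𝕜 J x) (i : ι) (v : F) :
    fderiv 𝕜 (fun m => J (Function.update x i m)) (x i) v = fderiv 𝕜 J x (Pi.single i v) := by
  have hJ' : DifferentiableAt 𝕜 J (Function.update x i (x i)) := by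
    rwa [Function.update_eq_self]
  rw [fderiv_fun_comp (x i) hJ' (hasFDerivAt_update x (x i)).differentiableAt, fderiv_update,
    Function.update_eq_self, comp_apply]
  congr 1
  ext j : 1
  rcases eq_or_ne j i with rfl | hji
  · simp
  · simp [hji]

end Calculus

section Telescoping

open ContinuousLinearMap

variable {𝕜 E : Type*} [RCLike 𝕜] [NormedAddCommGroup E] [InnerProductSpace 𝕜 E] [CompleteSpace E]

theorem sum_inner_source_eq_neg_sum_inner_forcing {K : ℕ} {M : Fin K → E →L[𝕜] E}
    {f h : Fin K → E} {w r : ℕ → E} (hw0 : w 0 = 0) (hrK : r K = 0)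
    (hw : ∀ j : Fin K, w (j + 1) = M j (w j) + f j)
    (hr : ∀ j : Fin K, r j = (M j).adjoint (r (j + 1)) - h j) :
    ∑ j : Fin K, inner 𝕜 (h j) (w j) = -∑ j : Fin K, inner 𝕜 (r (j + 1)) (f j) := by
  have hstep : ∀ j : Fin K, inner 𝕜 (r (j + 1)) (w (j + 1)) - inner 𝕜 (r j) (w j)
      = inner 𝕜 (r (j + 1)) (f j) + inner 𝕜 (h j) (w j) := by
    intro j
    rw [hw, hr, inner_add_right, inner_sub_left, adjoint_inner_left]
    ring
  have htel : ∑ j : Fin K, (inner 𝕜 (r (j + 1)) (w (j + 1)) - inner 𝕜 (r j) (w j)) = 0 := by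
    rw [Fin.sum_univ_eq_sum_range
        (fun j => inner 𝕜 (r (j + 1)) (w (j + 1)) - inner 𝕜 (r j) (w j)),
      Finset.sum_range_sub (fun j => inner 𝕜 (r j) (w j)), hrK, hw0, inner_zero_left,
      inner_zero_right, sub_zero]
  simp only [hstep, Finset.sum_add_distrib] at htel
  exact eq_neg_of_add_eq_zero_right htel

end Telescoping

section EulerStates

open ContinuousLinearMap

variable {𝕜 E F : Type*} [NontriviallyNormedField 𝕜] [NormedAddCommGroup E] [NormedSpace 𝕜 E]
  [NormedAddCommGroup F] [NormedSpace 𝕜 F] {K : ℕ} {Δt : 𝕜} {a : E × F → E} {β : ℕ → E → E}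
  {z : (Fin K → F) → ℕ → E}

theorem differentiable_euler_state {z0 : E} (ha : Differentiable 𝕜 a)
    (hβ : ∀ j, Differentiable 𝕜 (β j)) (hz0 : ∀ μ, z μ 0 = z0)
    (hzrec : ∀ μ, ∀ κ : Fin K, z μ (κ + 1) = z μ κ + Δt • a (z μ κ, μ κ) + β κ (z μ κ)) :
    ∀ j ≤ K, Differentiable 𝕜 (fun μ => z μ j) := by
  intro j
  induction j with
  | zero =>
    intro _
    simp only [hz0]
    exact differentiable_const z0
  | succ j ih =>
    intro hj
    have hzj := ih (Nat.le_of_succ_le hj)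
    have hstate : (fun μ => z μ (j + 1)) = fun μ =>
        z μ j + Δt • a (z μ j, μ ⟨j, hj⟩) + β j (z μ j) :=
      funext fun μ => hzrec μ ⟨j, hj⟩
    rw [hstate]
    exact (hzj.add ((ha.comp (hzj.prodMk (differentiable_apply _))).const_smul Δt)).add
      ((hβ j).comp hzj)

theorem fderiv_euler_state_succ_apply (ha : Differentiable 𝕜 a)
    (hβ : ∀ j, Differentiable 𝕜 (β j))
    (hzrec : ∀ μ, ∀ κ : Fin K, z μ (κ + 1) = z μ κ + Δt • a (z μ κ, μ κ) + β κ (z μ κ))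
    {μ : Fin K → F} {κ : Fin K} (hzκ : DifferentiableAt 𝕜 (fun μ' => z μ' κ) μ)
    (e : Fin K → F) :
    fderiv 𝕜 (fun μ' => z μ' (κ + 1)) μ e =
      (ContinuousLinearMap.id 𝕜 E + Δt • fderiv 𝕜 (fun x => a (x, μ κ)) (z μ κ)
          + fderiv 𝕜 (β κ) (z μ κ)) (fderiv 𝕜 (fun μ' => z μ' κ) μ e)
        + Δt • fderiv 𝕜 (fun m => a (z μ κ, m)) (μ κ) (e κ) := by
  have hstate : (fun μ' => z μ' (κ + 1)) = fun μ' =>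
      z μ' κ + Δt • a (z μ' κ, μ' κ) + β κ (z μ' κ) :=
    funext fun μ' => hzrec μ' κ
  have hproj : DifferentiableAt 𝕜 (fun μ' : Fin K → F => μ' κ) μ := differentiableAt_apply κ μ
  have haκ : DifferentiableAt 𝕜 (fun μ' => a (z μ' κ, μ' κ)) μ :=
    (ha _).comp μ (hzκ.prodMk hproj)
  have hderiv : HasFDerivAt (fun μ' => z μ' κ + Δt • a (z μ' κ, μ' κ) + β κ (z μ' κ))
      (fderiv 𝕜 (fun μ' => z μ' κ) μ + Δt • fderiv 𝕜 (fun μ' => a (z μ' κ, μ' κ)) μ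
        + (fderiv 𝕜 (β κ) (z μ κ)).comp (fderiv 𝕜 (fun μ' => z μ' κ) μ)) μ :=
    (hzκ.hasFDerivAt.add (haκ.hasFDerivAt.const_smul Δt)).add
      ((hβ κ _).hasFDerivAt.comp μ hzκ.hasFDerivAt)
  rw [hstate, hderiv.fderiv]
  simp only [add_apply, smul_apply, comp_apply, id_apply,
    fderiv_comp_prodMk_apply (ha _) hzκ hproj,
    (hasFDerivAt_apply (𝕜 := 𝕜) κ μ).fderiv, proj_apply]
  module

end EulerStates

section EulerCost

open ContinuousLinearMap

variable {𝕜 E F : Type*} [NontriviallyNormedField 𝕜] [NormedAddCommGroup E] [NormedSpace 𝕜 E]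
  [NormedAddCommGroup F] [NormedSpace 𝕜 F] {K : ℕ} {g : E × F → 𝕜} {z : (Fin K → F) → ℕ → E}

theorem fderiv_euler_cost_apply (c : 𝕜) (hg : Differentiable 𝕜 g)
    (hz : ∀ κ : Fin K, Differentiable 𝕜 (fun μ => z μ κ)) (μ e : Fin K → F) :
    fderiv 𝕜 (fun μ => c * ∑ κ : Fin K, g (z μ κ, μ κ)) μ e =
      c * ∑ κ : Fin K,
        (fderiv 𝕜 (fun x => g (x, μ κ)) (z μ κ) (fderiv 𝕜 (fun μ' => z μ' κ) μ e)
          + fderiv 𝕜 (fun m => g (z μ κ, m)) (μ κ) (e κ)) := by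
  have hterm : ∀ κ : Fin K, DifferentiableAt 𝕜 (fun μ => g (z μ κ, μ κ)) μ := fun κ =>
    (hg _).comp μ ((hz κ μ).prodMk (differentiableAt_apply κ μ))
  rw [fderiv_const_mul (DifferentiableAt.fun_sum fun κ _ => hterm κ),
    fderiv_fun_sum fun κ _ => hterm κ]
  simp only [smul_apply, sum_apply, smul_eq_mul,
    fderiv_comp_prodMk_apply (hg _) (hz _ μ) (differentiableAt_apply _ μ),
    (hasFDerivAt_apply (𝕜 := 𝕜) _ μ).fderiv, proj_apply]

end EulerCost

section ReducedGradient

open ContinuousLinearMap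

variable {E F : Type*} [NormedAddCommGroup E] [InnerProductSpace ℝ E] [CompleteSpace E]
  [NormedAddCommGroup F] [InnerProductSpace ℝ F] [CompleteSpace F] {K : ℕ} {Δt : ℝ}
  {a : E × F → E} {g : E × F → ℝ} {β : ℕ → E → E} {z : (Fin K → F) → ℕ → E}

theorem fderiv_euler_cost_eq_sum_inner {z0 : E} (ha : Differentiable ℝ a)
    (hg : Differentiable ℝ g) (hβ : ∀ j, Differentiable ℝ (β j)) (hz0 : ∀ μ, z μ 0 = z0)
    (hzrec : ∀ μ, ∀ κ : Fin K, z μ (κ + 1) = z μ κ + Δt • a (z μ κ, μ κ) + β κ (z μ κ))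
    (μ : Fin K → F) {r : ℕ → E} (hrK : r K = 0)
    (hrrec : ∀ κ : Fin K,
      r κ = r (κ + 1) + Δt • (fderiv ℝ (fun x => a (x, μ κ)) (z μ κ)).adjoint (r (κ + 1))
        + (fderiv ℝ (β κ) (z μ κ)).adjoint (r (κ + 1))
        - Δt • gradient (fun x => g (x, μ κ)) (z μ κ))
    (e : Fin K → F) :
    fderiv ℝ (fun μ => Δt * ∑ κ : Fin K, g (z μ κ, μ κ)) μ e =
      ∑ κ : Fin K, inner ℝ (Δt • gradient (fun m => g (z μ κ, m)) (μ κ)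
        - Δt • (fderiv ℝ (fun m => a (z μ κ, m)) (μ κ)).adjoint (r (κ + 1))) (e κ) := by
  have hz := differentiable_euler_state ha hβ hz0 hzrec
  set w : ℕ → E := fun j => fderiv ℝ (fun μ' => z μ' j) μ e with hw
  have hw0 : w 0 = 0 := by simp [w, hz0]
  have hadj := sum_inner_source_eq_neg_sum_inner_forcing
    (M := fun κ => ContinuousLinearMap.id ℝ E + Δt • fderiv ℝ (fun x => a (x, μ κ)) (z μ κ)
      + fderiv ℝ (β κ) (z μ κ))
    (f := fun κ => Δt • fderiv ℝ (fun m => a (z μ κ, m)) (μ κ) (e κ))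
    (h := fun κ => Δt • gradient (fun x => g (x, μ κ)) (z μ κ)) hw0 hrK
    (fun κ => fderiv_euler_state_succ_apply ha hβ hzrec (hz κ κ.2.le μ) e)
    (fun κ => by rw [hrrec κ]; simp [map_add, adjoint_id])
  rw [fderiv_euler_cost_apply Δt hg (fun κ => hz κ κ.2.le) μ e]
  simp only [hw, real_inner_smul_left, real_inner_smul_right, inner_sub_left, adjoint_inner_left,
    inner_gradient_left, Finset.sum_sub_distrib, ← Finset.mul_sum] at hadj ⊢
  rw [Finset.sum_add_distrib, mul_add, hadj]
  ring

end ReducedGradient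

theorem euler_adjoint_gradient_general {d L K : ℕ} (Δt : ℝ)
    (z0 : EuclideanSpace ℝ (Fin d))
    (a : EuclideanSpace ℝ (Fin d) × EuclideanSpace ℝ (Fin L) → EuclideanSpace ℝ (Fin d))
    (g : EuclideanSpace ℝ (Fin d) × EuclideanSpace ℝ (Fin L) → ℝ)
    (β : ℕ → EuclideanSpace ℝ (Fin d) → EuclideanSpace ℝ (Fin d))
    (ha : ContDiff ℝ 1 a) (hg : ContDiff ℝ 1 g) (hβ : ∀ κ, ContDiff ℝ 1 (β κ))
    -- the states, as functions of the control sequence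
    (z : (Fin K → EuclideanSpace ℝ (Fin L)) → ℕ → EuclideanSpace ℝ (Fin d))
    (hz0 : ∀ μ, z μ 0 = z0)
    (hzrec : ∀ μ, ∀ κ : Fin K,
      z μ ((κ : ℕ) + 1) = z μ κ + Δt • a (z μ κ, μ κ) + β κ (z μ κ))
    -- the discrete cost
    (J : (Fin K → EuclideanSpace ℝ (Fin L)) → ℝ)
    (hJ : J = fun μ => Δt * ∑ κ : Fin K, g (z μ κ, μ κ))
    -- a fixed control and its adjoint states
    (μ : Fin K → EuclideanSpace ℝ (Fin L))
    (r : ℕ → EuclideanSpace ℝ (Fin d))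
    (hrK : r K = 0)
    (hrrec : ∀ κ : Fin K,
      r κ = r ((κ : ℕ) + 1)
        + Δt • (fderiv ℝ (fun w => a (w, μ κ)) (z μ κ)).adjoint (r ((κ : ℕ) + 1))
        + (fderiv ℝ (β κ) (z μ κ)).adjoint (r ((κ : ℕ) + 1))
        - Δt • gradient (fun w => g (w, μ κ)) (z μ κ)) :
    Differentiable ℝ J ∧
    ∀ κ : Fin K,
      gradient (fun m => J (Function.update μ κ m)) (μ κ)
        = Δt • gradient (fun m => g (z μ κ, m)) (μ κ)
          - Δt • (fderiv ℝ (fun m => a (z μ κ, m)) (μ κ)).adjoint (r ((κ : ℕ) + 1)) := by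
  have ha' := ha.differentiable one_ne_zero
  have hg' := hg.differentiable one_ne_zero
  have hβ' := fun κ => (hβ κ).differentiable one_ne_zero
  have hz := differentiable_euler_state ha' hβ' hz0 hzrec
  have hJd : Differentiable ℝ J := by
    subst hJ
    exact (Differentiable.fun_sum fun (κ : Fin K) _ =>
      hg'.comp ((hz κ κ.2.le).prodMk (differentiable_apply κ))).const_mul Δt
  refine ⟨hJd, fun κ => ext_inner_right ℝ fun v => ?_⟩
  rw [inner_gradient_left, fderiv_comp_update_apply (hJd μ), hJ,
    fderiv_euler_cost_eq_sum_inner ha' hg' hβ' hz0 hzrec μ hrK hrrec,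
    Fintype.sum_eq_single κ fun i hi => by simp [Pi.single_eq_of_ne hi], Pi.single_eq_same]

/-- discretize-then-optimize adjoint gradient formula for the
explicit Euler scheme. The states `z^κ(μ)` follow the Euler recursion
`z^{κ+1} = z^κ + Δt·a(z^κ, μ^κ) + β^κ(z^κ)` from `z⁰`, the discrete cost is
`J(μ) = Δt·Σ_κ g(z^κ, μ^κ)`, and the adjoint states satisfy `r^K = 0` and
`r^κ = r^{κ+1} + Δt·(D_z a)^⊤ r^{κ+1} + (Dβ^κ)^⊤ r^{κ+1} − Δt·∇_z g`. Then `J`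
is differentiable and
`∇_{μ^κ} J(μ) = Δt·∇_μ g(z^κ, μ^κ) − Δt·(D_μ a(z^κ, μ^κ))^⊤ r^{κ+1}`. -/
theorem euler_adjoint_gradient {d L K : ℕ} (Δt : ℝ) (hΔt : 0 < Δt)
    (z0 : EuclideanSpace ℝ (Fin d))
    (a : EuclideanSpace ℝ (Fin d) × EuclideanSpace ℝ (Fin L) → EuclideanSpace ℝ (Fin d))
    (g : EuclideanSpace ℝ (Fin d) × EuclideanSpace ℝ (Fin L) → ℝ)
    (β : ℕ → EuclideanSpace ℝ (Fin d) → EuclideanSpace ℝ (Fin d))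
    (ha : ContDiff ℝ 1 a) (hg : ContDiff ℝ 1 g) (hβ : ∀ κ, ContDiff ℝ 1 (β κ))
    -- the states, as functions of the control sequence
    (z : (Fin K → EuclideanSpace ℝ (Fin L)) → ℕ → EuclideanSpace ℝ (Fin d))
    (hz0 : ∀ μ, z μ 0 = z0)
    (hzrec : ∀ μ, ∀ κ : Fin K,
      z μ ((κ : ℕ) + 1) = z μ κ + Δt • a (z μ κ, μ κ) + β κ (z μ κ))
    -- the discrete cost
    (J : (Fin K → EuclideanSpace ℝ (Fin L)) → ℝ)
    (hJ : J = fun μ => Δt * ∑ κ : Fin K, g (z μ κ, μ κ))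
    -- a fixed control and its adjoint states
    (μ : Fin K → EuclideanSpace ℝ (Fin L))
    (r : ℕ → EuclideanSpace ℝ (Fin d))
    (hrK : r K = 0)
    (hrrec : ∀ κ : Fin K,
      r κ = r ((κ : ℕ) + 1)
        + Δt • (fderiv ℝ (fun w => a (w, μ κ)) (z μ κ)).adjoint (r ((κ : ℕ) + 1))
        + (fderiv ℝ (β κ) (z μ κ)).adjoint (r ((κ : ℕ) + 1))
        - Δt • gradient (fun w => g (w, μ κ)) (z μ κ)) :
    Differentiable ℝ J ∧
    ∀ κ : Fin K,
      gradient (fun m => J (Function.update μ κ m)) (μ κ)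
        = Δt • gradient (fun m => g (z μ κ, m)) (μ κ)
          - Δt • (fderiv ℝ (fun m => a (z μ κ, m)) (μ κ)).adjoint (r ((κ : ℕ) + 1)) :=
  euler_adjoint_gradient_general Δt z0 a g β ha hg hβ z hz0 hzrec J hJ μ r hrK hrrec
end

section
/- Let d, L, K ∈ ℕ, Δt > 0, z⁰ ∈ ℝ^d, and let S ⊆ {1, …, K} be a set of jump indices. Let a : ℝ^d × ℝ^L → ℝ^d, g : ℝ^d × ℝ^L → ℝ, c : ℝ^d → ℝ^d and, for each κ ∈ {0, …, K−1}, β^κ : ℝ^d → ℝ^d all be continuously differentiable. For μ = (μ⁰, …, μ^{K−1}) ∈ (ℝ^L)^K define the states by z⁰(μ) = z⁰ and, for κ = 0, …, K−1: if κ+1 ∈ S then z^{κ+1}(μ) = c(z^κ(μ)) (a jump step), otherwise z^{κ+1}(μ) = z^κ(μ) + Δt·a(z^κ(μ), μ^κ) + β^κ(z^κ(μ)) (an Euler step). Define J(μ) = Δt·Σ_{κ : κ+1 ∉ S} g(z^κ(μ), μ^κ), the sum over Euler steps. Define adjoint states backward by r^K = 0 and, for κ = K−1, …, 0: if κ+1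 ∈ S then r^κ = (D c(z^κ))^⊤ r^{κ+1}, otherwise r^κ = r^{κ+1} + Δt·(D_z a(z^κ, μ^κ))^⊤ r^{κ+1} + (D β^κ(z^κ))^⊤ r^{κ+1} − Δt·∇_z g(z^κ, μ^κ). Then J is differentiable and for every κ ∈ {0, …, K−1}: if κ+1 ∉ S then ∇_{μ^κ} J(μ) = Δt·∇_μ g(z^κ, μ^κ) − Δt·(D_μ a(z^κ, μ^κ))^⊤ r^{κ+1}, and if κ+1 ∈ S then ∇_{μ^κ} J(μ) = 0. -/
/-!
Differentiating the state recursion `z^{j+1} = f_j(z^j, μ^j)` in a direction `h` gives the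
sensitivities `δ^{j+1} = ∂_z f_j δ^j + ∂_μ f_j h^j`, `δ^0 = 0`. Paired with the adjoint recursion
`r^j = (∂_z f_j)^* r^{j+1} - ∇_z ℓ_j`, the differences `⟪r^{j+1}, δ^{j+1}⟫ - ⟪r^j, δ^j⟫` equal
`⟪∇_z ℓ_j, δ^j⟫ + ⟪r^{j+1}, ∂_μ f_j h^j⟫`, and they telescope to `0` because `δ^0 = 0` and
`r^K = 0`. So the sensitivities drop out of `dJ(μ) h = Σ_j (⟪∇_z ℓ_j, δ^j⟫ + ⟪∇_μ ℓ_j, h^j⟫)`,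
leaving `Σ_j ⟪∇_μ ℓ_j - (∂_μ f_j)^* r^{j+1}, h^j⟫`. The scheme with jumps is the case where `f_j`
is either the jump map `c` (independent of the control, with `ℓ_j = 0`) or the Euler step
(with `ℓ_j = Δt g`).
-/

open scoped RealInnerProductSpace

section ForwardRecursion

variable {E F G : Type*} [NormedAddCommGroup E] [NormedSpace ℝ E] [NormedAddCommGroup F]
  [NormedSpace ℝ F] [NormedAddCommGroup G] [NormedSpace ℝ G] {φ : E × F → G}

theorem HasFDerivAt.fderiv_partial_fst {φ' : E × F →L[ℝ] G} {p : E × F}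
    (hφ : HasFDerivAt φ φ' p) :
    fderiv ℝ (fun w => φ (w, p.2)) p.1 = φ'.comp (.inl ℝ E F) :=
  (hφ.comp p.1 (hasFDerivAt_prodMk_left p.1 p.2)).fderiv

theorem HasFDerivAt.fderiv_partial_snd {φ' : E × F →L[ℝ] G} {p : E × F}
    (hφ : HasFDerivAt φ φ' p) :
    fderiv ℝ (fun u => φ (p.1, u)) p.2 = φ'.comp (.inr ℝ E F) :=
  (hφ.comp p.2 (hasFDerivAt_prodMk_right p.1 p.2)).fderiv

theorem fderiv_apply_eq_partial_add {p : E × F} (hφ : DifferentiableAt ℝ φ p)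
    (v : E × F) :
    fderiv ℝ φ p v = fderiv ℝ (fun w => φ (w, p.2)) p.1 v.1
      + fderiv ℝ (fun u => φ (p.1, u)) p.2 v.2 := by
  rw [hφ.hasFDerivAt.fderiv_partial_fst, hφ.hasFDerivAt.fderiv_partial_snd]
  simp only [ContinuousLinearMap.comp_apply, ContinuousLinearMap.inl_apply,
    ContinuousLinearMap.inr_apply, ← map_add, Prod.mk_add_mk, add_zero, zero_add]

theorem fderiv_comp_prodMk_eval_apply {ι : Type*} [Fintype ι] {X : (ι → F) → E} {μ : ι → F}
    (j : ι) (hφ : DifferentiableAt ℝ φ (X μ, μ j)) (hX : DifferentiableAt ℝ X μ) (h : ι → F) :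
    fderiv ℝ (fun ν => φ (X ν, ν j)) μ h
      = fderiv ℝ (fun w => φ (w, μ j)) (X μ) (fderiv ℝ X μ h)
        + fderiv ℝ (fun u => φ (X μ, u)) (μ j) (h j) := by
  have hpair : HasFDerivAt (fun ν => (X ν, ν j))
      ((fderiv ℝ X μ).prod (.proj j)) μ :=
    hX.hasFDerivAt.prodMk (hasFDerivAt_apply j μ)
  have hcomp : HasFDerivAt (fun ν => φ (X ν, ν j)) _ μ := hφ.hasFDerivAt.comp μ hpair
  rw [hcomp.fderiv, ContinuousLinearMap.comp_apply,
    fderiv_apply_eq_partial_add hφ]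
  rfl

variable {K : ℕ} {f : ℕ → E × F → E} {x : (Fin K → F) → ℕ → E} {x₀ : E}

theorem differentiable_state (hf : ∀ j, Differentiable ℝ (f j)) (hx0 : ∀ ν, x ν 0 = x₀)
    (hx : ∀ ν (j : Fin K), x ν (j + 1) = f j (x ν j, ν j)) :
    ∀ j ≤ K, Differentiable ℝ (fun ν => x ν j)
  | 0, _ => by simp only [hx0]; exact differentiable_const x₀
  | j + 1, hj => by
    have hx' : (fun ν => x ν (j + 1)) = fun ν => f j (x ν j, ν ⟨j, hj⟩) :=
      funext fun ν => hx ν ⟨j, hj⟩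
    rw [hx']
    exact (hf j).comp ((differentiable_state hf hx0 hx j (Nat.le_of_succ_le hj)).prodMk
      (differentiable_apply _))

theorem fderiv_state_succ_apply (hf : ∀ j, Differentiable ℝ (f j)) (hx0 : ∀ ν, x ν 0 = x₀)
    (hx : ∀ ν (j : Fin K), x ν (j + 1) = f j (x ν j, ν j)) (μ h : Fin K → F) (j : Fin K) :
    fderiv ℝ (fun ν => x ν (j + 1)) μ h
      = fderiv ℝ (fun w => f j (w, μ j)) (x μ j) (fderiv ℝ (fun ν => x ν j) μ h)
        + fderiv ℝ (fun u => f j (x μ j, u)) (μ j) (h j) := by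
  simp only [hx]
  exact fderiv_comp_prodMk_eval_apply j (hf j _)
    (differentiable_state hf hx0 hx j j.isLt.le μ) h

theorem differentiable_cost {ℓ : ℕ → E × F → ℝ} (hf : ∀ j, Differentiable ℝ (f j))
    (hℓ : ∀ j, Differentiable ℝ (ℓ j)) (hx0 : ∀ ν, x ν 0 = x₀)
    (hx : ∀ ν (j : Fin K), x ν (j + 1) = f j (x ν j, ν j)) :
    Differentiable ℝ (fun ν => ∑ j : Fin K, ℓ j (x ν j, ν j)) :=
  Differentiable.fun_sum fun j _ => (hℓ j).comp
    ((differentiable_state hf hx0 hx j j.isLt.le).prodMk (differentiable_apply _))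

end ForwardRecursion

section Adjoint

variable {E F : Type*} [NormedAddCommGroup E] [InnerProductSpace ℝ E] [CompleteSpace E]
  [NormedAddCommGroup F] [InnerProductSpace ℝ F] [CompleteSpace F]

theorem gradient_const_mul {f : F → ℝ} {x : F} (hf : DifferentiableAt ℝ f x) (c : ℝ) :
    gradient (fun y => c * f y) x = c • gradient f x := by
  refine HasGradientAt.gradient ?_
  rw [hasGradientAt_iff_hasFDerivAt, map_smul]
  exact hf.hasGradientAt.hasFDerivAt.const_mul c

theorem hasGradientAt_update_of_fderiv_apply {ι : Type*} [Fintype ι] [DecidableEq ι]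
    {J : (ι → F) → ℝ} {μ G : ι → F} (hJ : DifferentiableAt ℝ J μ)
    (hG : ∀ h, fderiv ℝ J μ h = ∑ i, ⟪G i, h i⟫) (i : ι) :
    HasGradientAt (fun m => J (Function.update μ i m)) (G i) (μ i) := by
  have hJ' : HasFDerivAt J (fderiv ℝ J μ) (Function.update μ i (μ i)) := by
    rw [Function.update_eq_self]; exact hJ.hasFDerivAt
  have hcomp : HasFDerivAt (fun m => J (Function.update μ i m)) _ (μ i) :=
    hJ'.comp (μ i) (hasFDerivAt_update μ (μ i))
  rw [hasGradientAt_iff_hasFDerivAt]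
  refine hcomp.congr_fderiv (ContinuousLinearMap.ext fun v => ?_)
  simp [hG, Pi.single_apply, ite_apply, apply_ite]

theorem sum_inner_add_inner_eq_zero_of_adjoint {K : ℕ} (A : Fin K → E →L[ℝ] E)
    (q b : Fin K → E) (r δ : ℕ → E) (hrK : r K = 0)
    (hr : ∀ j : Fin K, r j = (A j).adjoint (r (j + 1)) - q j)
    (hδ0 : δ 0 = 0) (hδ : ∀ j : Fin K, δ (j + 1) = A j (δ j) + b j) :
    ∑ j : Fin K, (⟪q j, δ j⟫ + ⟪r (j + 1), b j⟫) = 0 := by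
  have hstep : ∀ j : Fin K,
      ⟪q j, δ j⟫ + ⟪r (j + 1), b j⟫ = ⟪r (j + 1), δ (j + 1)⟫ - ⟪r j, δ j⟫ := by
    intro j
    rw [hδ j, hr j, inner_sub_left, ContinuousLinearMap.adjoint_inner_left, inner_add_right]
    ring
  rw [Finset.sum_congr rfl fun j _ => hstep j,
    Fin.sum_univ_eq_sum_range (fun j => ⟪r (j + 1), δ (j + 1)⟫ - ⟪r j, δ j⟫),
    Finset.sum_range_sub (fun j => ⟪r j, δ j⟫), hrK, hδ0, inner_zero_left, inner_zero_right,
    sub_zero]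

variable {K : ℕ} {f : ℕ → E × F → E} {ℓ : ℕ → E × F → ℝ} {x : (Fin K → F) → ℕ → E} {x₀ : E}

theorem fderiv_cost_apply (hf : ∀ j, Differentiable ℝ (f j))
    (hℓ : ∀ j, Differentiable ℝ (ℓ j)) (hx0 : ∀ ν, x ν 0 = x₀)
    (hx : ∀ ν (j : Fin K), x ν (j + 1) = f j (x ν j, ν j)) (μ h : Fin K → F) :
    fderiv ℝ (fun ν => ∑ j : Fin K, ℓ j (x ν j, ν j)) μ h
      = ∑ j : Fin K, (⟪gradient (fun w => ℓ j (w, μ j)) (x μ j),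
            fderiv ℝ (fun ν => x ν j) μ h⟫
          + ⟪gradient (fun u => ℓ j (x μ j, u)) (μ j), h j⟫) := by
  have hxd := differentiable_state hf hx0 hx
  have hterm : ∀ j : Fin K, DifferentiableAt ℝ (fun ν => ℓ j (x ν j, ν j)) μ := fun j =>
    ((hℓ j).comp ((hxd j j.isLt.le).prodMk (differentiable_apply _))).differentiableAt
  rw [fderiv_fun_sum fun j _ => hterm j, sum_apply]
  refine Finset.sum_congr rfl fun j _ => ?_
  rw [fderiv_comp_prodMk_eval_apply j (hℓ j _) (hxd j j.isLt.le μ), inner_gradient_left,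
    inner_gradient_left]

theorem hasGradientAt_update_of_adjoint {J : (Fin K → F) → ℝ}
    (hf : ∀ j, Differentiable ℝ (f j)) (hℓ : ∀ j, Differentiable ℝ (ℓ j))
    (hx0 : ∀ ν, x ν 0 = x₀) (hx : ∀ ν (j : Fin K), x ν (j + 1) = f j (x ν j, ν j))
    (hJ : J = fun ν => ∑ j : Fin K, ℓ j (x ν j, ν j)) (μ : Fin K → F) (r : ℕ → E)
    (hrK : r K = 0)
    (hr : ∀ j : Fin K, r j = (fderiv ℝ (fun w => f j (w, μ j)) (x μ j)).adjoint (r (j + 1))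
      - gradient (fun w => ℓ j (w, μ j)) (x μ j))
    (κ : Fin K) :
    HasGradientAt (fun m => J (Function.update μ κ m))
      (gradient (fun u => ℓ κ (x μ κ, u)) (μ κ)
        - (fderiv ℝ (fun u => f κ (x μ κ, u)) (μ κ)).adjoint (r (κ + 1))) (μ κ) := by
  subst hJ
  refine hasGradientAt_update_of_fderiv_apply
    (G := fun j : Fin K => gradient (fun u => ℓ j (x μ j, u)) (μ j)
      - (fderiv ℝ (fun u => f j (x μ j, u)) (μ j)).adjoint (r (j + 1)))
    (differentiable_cost hf hℓ hx0 hx μ) (fun h => ?_) κ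
  have hδ0 : fderiv ℝ (fun ν => x ν 0) μ h = 0 := by
    simp only [hx0, fderiv_const_apply, zero_apply]
  have hadj := sum_inner_add_inner_eq_zero_of_adjoint
    (fun j => fderiv ℝ (fun w => f j (w, μ j)) (x μ j))
    (fun j => gradient (fun w => ℓ j (w, μ j)) (x μ j))
    (fun j => fderiv ℝ (fun u => f j (x μ j, u)) (μ j) (h j))
    r (fun i => fderiv ℝ (fun ν => x ν i) μ h) hrK hr hδ0
    (fderiv_state_succ_apply hf hx0 hx μ h)
  -- subtracting the vanishing sum `hadj` cancels the state sensitivities termwise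
  rw [fderiv_cost_apply hf hℓ hx0 hx μ h, ← sub_zero (∑ j : Fin K, _), ← hadj,
    ← Finset.sum_sub_distrib]
  refine Finset.sum_congr rfl fun j _ => ?_
  rw [inner_sub_left, ContinuousLinearMap.adjoint_inner_left]
  ring

end Adjoint

section JumpEuler

variable {E F : Type*} (Δt : ℝ) (S : Finset ℕ)

def jumpEulerStep [AddCommGroup E] [Module ℝ E] (a : E × F → E) (c : E → E) (β : ℕ → E → E)
    (j : ℕ) (p : E × F) : E :=
  if j + 1 ∈ S then c p.1 else p.1 + Δt • a p + β j p.1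

def jumpEulerCost (g : E × F → ℝ) (j : ℕ) (p : E × F) : ℝ :=
  if j + 1 ∈ S then 0 else Δt * g p

theorem sum_jumpEulerCost {g : E × F → ℝ} {K : ℕ} (X : Fin K → E × F) :
    ∑ j : Fin K, jumpEulerCost Δt S g j (X j)
      = Δt * ∑ j ∈ Finset.univ.filter (fun j : Fin K => (j : ℕ) + 1 ∉ S), g (X j) := by
  simp only [jumpEulerCost, Finset.mul_sum, Finset.sum_filter, ite_not, mul_ite, mul_zero]

section Differentiability

variable [NormedAddCommGroup E] [NormedSpace ℝ E] [NormedAddCommGroup F] [NormedSpace ℝ F]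
  {a : E × F → E} {c : E → E} {β : ℕ → E → E} {g : E × F → ℝ}

theorem differentiable_jumpEulerStep (ha : Differentiable ℝ a) (hc : Differentiable ℝ c)
    (hβ : ∀ j, Differentiable ℝ (β j)) (j : ℕ) :
    Differentiable ℝ (jumpEulerStep Δt S a c β j) := by
  unfold jumpEulerStep
  split_ifs <;> fun_prop

theorem fderiv_jumpEulerStep_fst (ha : Differentiable ℝ a) (hβ : ∀ j, Differentiable ℝ (β j))
    (j : ℕ) (x : E) (u : F) :
    fderiv ℝ (fun w => jumpEulerStep Δt S a c β j (w, u)) x =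
      if j + 1 ∈ S then fderiv ℝ c x
      else .id ℝ E + Δt • fderiv ℝ (fun w => a (w, u)) x + fderiv ℝ (β j) x := by
  unfold jumpEulerStep
  split_ifs
  · rfl
  · have hax : DifferentiableAt ℝ (fun w => a (w, u)) x := by fun_prop
    rw [fderiv_fun_add (by fun_prop) (by fun_prop), fderiv_fun_add (by fun_prop) (by fun_prop),
      fderiv_fun_id, fderiv_fun_const_smul hax]

theorem fderiv_jumpEulerStep_snd (ha : Differentiable ℝ a) (j : ℕ) (x : E) (u : F) :
    fderiv ℝ (fun u => jumpEulerStep Δt S a c β j (x, u)) u =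
      if j + 1 ∈ S then 0 else Δt • fderiv ℝ (fun u => a (x, u)) u := by
  unfold jumpEulerStep
  split_ifs
  · exact fderiv_const_apply (c x)
  · have hau : DifferentiableAt ℝ (fun u => a (x, u)) u := by fun_prop
    dsimp only
    rw [fderiv_add_const, fderiv_const_add, fderiv_fun_const_smul hau]

theorem differentiable_jumpEulerCost (hg : Differentiable ℝ g) (j : ℕ) :
    Differentiable ℝ (jumpEulerCost Δt S g j) := by
  unfold jumpEulerCost
  split_ifs <;> fun_prop

end Differentiability

variable [NormedAddCommGroup E] [InnerProductSpace ℝ E] [NormedAddCommGroup F]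
  [InnerProductSpace ℝ F] {g : E × F → ℝ}

theorem gradient_jumpEulerCost_fst [CompleteSpace E] (hg : Differentiable ℝ g) (j : ℕ) (x : E)
    (u : F) :
    gradient (fun w => jumpEulerCost Δt S g j (w, u)) x =
      if j + 1 ∈ S then 0 else Δt • gradient (fun w => g (w, u)) x := by
  unfold jumpEulerCost
  split_ifs
  · exact gradient_fun_const x 0
  · exact gradient_const_mul (by fun_prop) Δt

theorem gradient_jumpEulerCost_snd [CompleteSpace F] (hg : Differentiable ℝ g) (j : ℕ) (x : E)
    (u : F) :
    gradient (fun u => jumpEulerCost Δt S g j (x, u)) u =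
      if j + 1 ∈ S then 0 else Δt • gradient (fun u => g (x, u)) u := by
  unfold jumpEulerCost
  split_ifs
  · exact gradient_fun_const u 0
  · exact gradient_const_mul (by fun_prop) Δt

end JumpEuler

theorem euler_jump_adjoint_gradient_general {d L K : ℕ} (Δt : ℝ)
    (z0 : EuclideanSpace ℝ (Fin d)) (S : Finset ℕ)
    (a : EuclideanSpace ℝ (Fin d) × EuclideanSpace ℝ (Fin L) → EuclideanSpace ℝ (Fin d))
    (g : EuclideanSpace ℝ (Fin d) × EuclideanSpace ℝ (Fin L) → ℝ)
    (c : EuclideanSpace ℝ (Fin d) → EuclideanSpace ℝ (Fin d))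
    (β : ℕ → EuclideanSpace ℝ (Fin d) → EuclideanSpace ℝ (Fin d))
    (ha : ContDiff ℝ 1 a) (hg : ContDiff ℝ 1 g) (hc : ContDiff ℝ 1 c)
    (hβ : ∀ κ, ContDiff ℝ 1 (β κ))
    -- the states, as functions of the control sequence
    (z : (Fin K → EuclideanSpace ℝ (Fin L)) → ℕ → EuclideanSpace ℝ (Fin d))
    (hz0 : ∀ μ, z μ 0 = z0)
    (hzjump : ∀ μ, ∀ κ : Fin K, (κ : ℕ) + 1 ∈ S →
      z μ ((κ : ℕ) + 1) = c (z μ κ))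
    (hzeuler : ∀ μ, ∀ κ : Fin K, (κ : ℕ) + 1 ∉ S →
      z μ ((κ : ℕ) + 1) = z μ κ + Δt • a (z μ κ, μ κ) + β κ (z μ κ))
    -- the discrete cost (sum over the Euler steps)
    (J : (Fin K → EuclideanSpace ℝ (Fin L)) → ℝ)
    (hJ : J = fun μ => Δt *
      ∑ κ ∈ Finset.univ.filter (fun κ : Fin K => (κ : ℕ) + 1 ∉ S), g (z μ κ, μ κ))
    -- a fixed control and its adjoint states
    (μ : Fin K → EuclideanSpace ℝ (Fin L))
    (r : ℕ → EuclideanSpace ℝ (Fin d))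
    (hrK : r K = 0)
    (hrjump : ∀ κ : Fin K, (κ : ℕ) + 1 ∈ S →
      r κ = (fderiv ℝ c (z μ κ)).adjoint (r ((κ : ℕ) + 1)))
    (hreuler : ∀ κ : Fin K, (κ : ℕ) + 1 ∉ S →
      r κ = r ((κ : ℕ) + 1)
        + Δt • (fderiv ℝ (fun w => a (w, μ κ)) (z μ κ)).adjoint (r ((κ : ℕ) + 1))
        + (fderiv ℝ (β κ) (z μ κ)).adjoint (r ((κ : ℕ) + 1))
        - Δt • gradient (fun w => g (w, μ κ)) (z μ κ)) :
    Differentiable ℝ J ∧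
    ∀ κ : Fin K,
      ((κ : ℕ) + 1 ∉ S →
        gradient (fun m => J (Function.update μ κ m)) (μ κ)
          = Δt • gradient (fun m => g (z μ κ, m)) (μ κ)
            - Δt • (fderiv ℝ (fun m => a (z μ κ, m)) (μ κ)).adjoint (r ((κ : ℕ) + 1))) ∧
      ((κ : ℕ) + 1 ∈ S →
        gradient (fun m => J (Function.update μ κ m)) (μ κ) = 0) := by
  have ha' := ha.differentiable one_ne_zero
  have hg' := hg.differentiable one_ne_zero
  have hβ' := fun j => (hβ j).differentiable one_ne_zero
  have hf := differentiable_jumpEulerStep Δt S ha' (hc.differentiable one_ne_zero) hβ'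
  have hℓ := differentiable_jumpEulerCost Δt S hg'
  have hz : ∀ ν (j : Fin K), z ν (j + 1) = jumpEulerStep Δt S a c β j (z ν j, ν j) := by
    intro ν j
    by_cases hs : (j : ℕ) + 1 ∈ S
    · rw [hzjump ν j hs, jumpEulerStep, if_pos hs]
    · rw [hzeuler ν j hs, jumpEulerStep, if_neg hs]
  have hJ' : J = fun ν => ∑ j : Fin K, jumpEulerCost Δt S g j (z ν j, ν j) := by
    simp only [hJ, sum_jumpEulerCost]
  have hr : ∀ j : Fin K, r j =
      (fderiv ℝ (fun w => jumpEulerStep Δt S a c β j (w, μ j)) (z μ j)).adjoint (r (j + 1))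
        - gradient (fun w => jumpEulerCost Δt S g j (w, μ j)) (z μ j) := by
    intro j
    rw [fderiv_jumpEulerStep_fst Δt S ha' hβ',
      gradient_jumpEulerCost_fst Δt S hg']
    by_cases hs : (j : ℕ) + 1 ∈ S
    · simp only [if_pos hs, hrjump j hs, sub_zero]
    · simp only [hreuler j hs, if_neg hs, map_add, ContinuousLinearMap.adjoint_id, map_smul,
        add_apply, ContinuousLinearMap.id_apply, smul_apply]
  refine ⟨hJ' ▸ differentiable_cost hf hℓ hz0 hz, fun κ => ?_⟩
  rw [(hasGradientAt_update_of_adjoint hf hℓ hz0 hz hJ' μ r hrK hr κ).gradient,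
    fderiv_jumpEulerStep_snd Δt S ha', gradient_jumpEulerCost_snd Δt S hg']
  constructor <;> intro hs
  · simp only [if_neg hs, map_smul, smul_apply]
  · simp only [if_pos hs, map_zero, zero_apply, sub_self]

/-- discretize-then-optimize adjoint gradient formula for the
explicit Euler scheme with jump steps. With jump index set `S ⊆ {1,…,K}`, the
states follow `z^{κ+1} = c(z^κ)` if `κ+1 ∈ S` and the Euler step otherwise; the
cost is `J(μ) = Δt·Σ_{κ : κ+1 ∉ S} g(z^κ, μ^κ)`; the adjoint states satisfy
`r^K = 0`, `r^κ = (Dc(z^κ))^⊤ r^{κ+1}` at jump steps and the Euler adjoint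
recursion otherwise. Then `J` is differentiable, and `∇_{μ^κ} J(μ)` equals
`Δt·∇_μ g(z^κ, μ^κ) − Δt·(D_μ a(z^κ, μ^κ))^⊤ r^{κ+1}` if `κ+1 ∉ S`, and `0` if
`κ+1 ∈ S`. -/
theorem euler_jump_adjoint_gradient {d L K : ℕ} (Δt : ℝ) (hΔt : 0 < Δt)
    (z0 : EuclideanSpace ℝ (Fin d)) (S : Finset ℕ) (hS : S ⊆ Finset.Icc 1 K)
    (a : EuclideanSpace ℝ (Fin d) × EuclideanSpace ℝ (Fin L) → EuclideanSpace ℝ (Fin d))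
    (g : EuclideanSpace ℝ (Fin d) × EuclideanSpace ℝ (Fin L) → ℝ)
    (c : EuclideanSpace ℝ (Fin d) → EuclideanSpace ℝ (Fin d))
    (β : ℕ → EuclideanSpace ℝ (Fin d) → EuclideanSpace ℝ (Fin d))
    (ha : ContDiff ℝ 1 a) (hg : ContDiff ℝ 1 g) (hc : ContDiff ℝ 1 c)
    (hβ : ∀ κ, ContDiff ℝ 1 (β κ))
    -- the states, as functions of the control sequence
    (z : (Fin K → EuclideanSpace ℝ (Fin L)) → ℕ → EuclideanSpace ℝ (Fin d))
    (hz0 : ∀ μ, z μ 0 = z0)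
    (hzjump : ∀ μ, ∀ κ : Fin K, (κ : ℕ) + 1 ∈ S →
      z μ ((κ : ℕ) + 1) = c (z μ κ))
    (hzeuler : ∀ μ, ∀ κ : Fin K, (κ : ℕ) + 1 ∉ S →
      z μ ((κ : ℕ) + 1) = z μ κ + Δt • a (z μ κ, μ κ) + β κ (z μ κ))
    -- the discrete cost (sum over the Euler steps)
    (J : (Fin K → EuclideanSpace ℝ (Fin L)) → ℝ)
    (hJ : J = fun μ => Δt *
      ∑ κ ∈ Finset.univ.filter (fun κ : Fin K => (κ : ℕ) + 1 ∉ S), g (z μ κ, μ κ))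
    -- a fixed control and its adjoint states
    (μ : Fin K → EuclideanSpace ℝ (Fin L))
    (r : ℕ → EuclideanSpace ℝ (Fin d))
    (hrK : r K = 0)
    (hrjump : ∀ κ : Fin K, (κ : ℕ) + 1 ∈ S →
      r κ = (fderiv ℝ c (z μ κ)).adjoint (r ((κ : ℕ) + 1)))
    (hreuler : ∀ κ : Fin K, (κ : ℕ) + 1 ∉ S →
      r κ = r ((κ : ℕ) + 1)
        + Δt • (fderiv ℝ (fun w => a (w, μ κ)) (z μ κ)).adjoint (r ((κ : ℕ) + 1))
        + (fderiv ℝ (β κ) (z μ κ)).adjoint (r ((κ : ℕ) + 1))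
        - Δt • gradient (fun w => g (w, μ κ)) (z μ κ)) :
    Differentiable ℝ J ∧
    ∀ κ : Fin K,
      ((κ : ℕ) + 1 ∉ S →
        gradient (fun m => J (Function.update μ κ m)) (μ κ)
          = Δt • gradient (fun m => g (z μ κ, m)) (μ κ)
            - Δt • (fderiv ℝ (fun m => a (z μ κ, m)) (μ κ)).adjoint (r ((κ : ℕ) + 1))) ∧
      ((κ : ℕ) + 1 ∈ S →
        gradient (fun m => J (Function.update μ κ m)) (μ κ) = 0) :=
  euler_jump_adjoint_gradient_general Δt z0 S a g c β ha hg hc hβ z hz0 hzjump hzeuler J hJ μ r hrK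
    hrjump hreuler
end

section
/- Let L, K, N ∈ ℕ, Δt > 0, α > 0, η ∈ ℝ. Let φ : ℝ² → ℝ^L and 𝒥 : ℝ² → ℝ be continuously differentiable, and define a : ℝ² × ℝ^L → ℝ² by a((x,v), μ) = (v, ⟨μ, φ(x,v)⟩ − η x) and g : ℝ² × ℝ^L → ℝ by g(z, μ) = 𝒥(z) + (α/2)·⟨μ, φ(z)⟩². For each particle j ∈ {1, …, N} let z_j⁰ ∈ ℝ² and let β_j^κ : ℝ² → ℝ² (κ = 0, …, K−1) be continuously differentiable, and for μ = (μ⁰, …, μ^{K−1}) ∈ (ℝ^L)^K define the states z_j^κ(μ) by z_j⁰(μ) = z_j⁰ and z_j^{κ+1}(μ) = z_j^κ(μ) + Δt·a(z_j^κ(μ), μ^κ) + β_j^κ(z_j^κ(μ)), and the adjoint states r_j^κ = (q_j^κ, p_j^κ) ∈ ℝ² by r_j^K = 0 and r_j^κ = r_j^{κ+1} + Δt·(D_z a(z_j^κ, μ^κ))^⊤ r_j^{κ+1} + (D β_j^κ(z_j^κ))^⊤ r_j^{κ+1} − Δt·∇_z g(z_j^κ, μ^κ). Define the discrete reduced objective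 Ĵ(μ) = (Δt/N)·Σ_{j=1}^N Σ_{κ=0}^{K−1} g(z_j^κ(μ), μ^κ). Then for every κ ∈ {0, …, K−1}, ∇_{μ^κ} Ĵ(μ) = (Δt/N)·Σ_{j=1}^N [ α·⟨φ(z_j^κ), μ^κ⟩·φ(z_j^κ) − p_j^{κ+1}·φ(z_j^κ) ]. -/
/-!
Fix the control index `k`. The objective splits into the costs before step `k`, which do not
depend on `μᵏ`, the cost of step `k`, and the cost-to-go from the state `zᵏ⁺¹ = f(zᵏ, μᵏ)`.
The backward adjoint recursion is the chain rule for the cost-to-go, so `-rⁿ` is its gradient at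
`zⁿ`; the chain rule through `μᵏ ↦ zᵏ⁺¹`, whose derivative `Δt ⟨φ(zᵏ), ·⟩ e₂` has adjoint
`r ↦ Δt r₂ φ(zᵏ)`, then produces the term `-pᵏ⁺¹ φ(zᵏ)`.
-/

open scoped BigOperators RealInnerProductSpace
open Finset InnerProductSpace

section Gradient

variable {E F : Type*} [NormedAddCommGroup E] [InnerProductSpace ℝ E] [CompleteSpace E]
  [NormedAddCommGroup F] [InnerProductSpace ℝ F] [CompleteSpace F]
  {f g : E → ℝ} {f' g' x : E}

theorem HasGradientAt.add (hf : HasGradientAt f f' x) (hg : HasGradientAt g g' x) :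
    HasGradientAt (fun y => f y + g y) (f' + g') x := by
  rw [hasGradientAt_iff_hasFDerivAt, map_add]
  exact hf.hasFDerivAt.add hg.hasFDerivAt

theorem HasGradientAt.const_add (c : ℝ) (hf : HasGradientAt f f' x) :
    HasGradientAt (fun y => c + f y) f' x := by
  simpa using (hasGradientAt_const x c).add hf

theorem HasGradientAt.const_mul (c : ℝ) (hf : HasGradientAt f f' x) :
    HasGradientAt (fun y => c * f y) (c • f') x := by
  rw [hasGradientAt_iff_hasFDerivAt, map_smul]
  exact hf.hasFDerivAt.const_mul c

theorem HasGradientAt.fun_sum {ι : Type*} (s : Finset ι) {f : ι → E → ℝ} {f' : ι → E}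
    (hf : ∀ i ∈ s, HasGradientAt (f i) (f' i) x) :
    HasGradientAt (fun y => ∑ i ∈ s, f i y) (∑ i ∈ s, f' i) x := by
  rw [hasGradientAt_iff_hasFDerivAt, map_sum]
  exact HasFDerivAt.fun_sum fun i hi => (hf i hi).hasFDerivAt

theorem HasGradientAt.comp_hasFDerivAt {h : F → ℝ} {h' : F} {k : E → F} {A : E →L[ℝ] F}
    (hh : HasGradientAt h h' (k x)) (hk : HasFDerivAt k A x) :
    HasGradientAt (fun y => h (k y)) (A.adjoint h') x := by
  have hdual : (toDual ℝ F h').comp A = toDual ℝ E (A.adjoint h') := by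
    ext v
    simp [ContinuousLinearMap.adjoint_inner_left]
  rw [hasGradientAt_iff_hasFDerivAt, ← hdual]
  exact hh.hasFDerivAt.comp x hk

end Gradient

section CostToGo

variable {E : Type*} {K : ℕ}

noncomputable def costToGo (F : Fin K → E → E) (C : Fin K → E → ℝ) (n : ℕ) (w : E) : ℝ :=
  if h : n < K then C ⟨n, h⟩ w + costToGo F C (n + 1) (F ⟨n, h⟩ w) else 0
termination_by K - n

variable {F : Fin K → E → E} {C : Fin K → E → ℝ} {s : ℕ → E}

theorem costToGo_of_le {n : ℕ} (hn : K ≤ n) (w : E) : costToGo F C n w = 0 := by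
  rw [costToGo, dif_neg (not_lt.2 hn)]

theorem costToGo_of_lt {n : ℕ} (hn : n < K) (w : E) :
    costToGo F C n w = C ⟨n, hn⟩ w + costToGo F C (n + 1) (F ⟨n, hn⟩ w) := by
  rw [costToGo, dif_pos hn]

theorem costToGo_eq_sum (n : ℕ) (hs : ∀ κ : Fin K, n ≤ κ → s (κ + 1) = F κ (s κ)) :
    costToGo F C n (s n) = ∑ κ ∈ univ.filter (fun κ : Fin K => n ≤ κ), C κ (s κ) := by
  by_cases hn : n < K
  · have hsplit : ∀ κ : Fin K, (if n ≤ (κ : ℕ) then C κ (s κ) else 0) =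
        (if κ = ⟨n, hn⟩ then C κ (s κ) else 0) + (if n + 1 ≤ (κ : ℕ) then C κ (s κ) else 0) := by
      intro κ
      have := Fin.ext_iff (a := κ) (b := ⟨n, hn⟩)
      split_ifs <;> simp_all <;> omega
    rw [costToGo_of_lt hn, ← hs ⟨n, hn⟩ le_rfl,
      costToGo_eq_sum (n + 1) fun κ hκ => hs κ (by omega), sum_filter, sum_filter,
      sum_congr rfl fun κ _ => hsplit κ, sum_add_distrib, sum_ite_eq']
    simp
  · rw [costToGo_of_le (not_lt.1 hn)]
    exact (sum_eq_zero fun κ hκ => absurd (mem_filter.1 hκ).2 (by have := κ.isLt; omega)).symm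
termination_by K - n

theorem hasGradientAt_costToGo [NormedAddCommGroup E] [InnerProductSpace ℝ E] [CompleteSpace E]
    {A : Fin K → E →L[ℝ] E} {G : Fin K → E} {r : ℕ → E}
    (hs : ∀ κ : Fin K, s (κ + 1) = F κ (s κ))
    (hF : ∀ κ : Fin K, HasFDerivAt (F κ) (A κ) (s κ))
    (hC : ∀ κ : Fin K, HasGradientAt (C κ) (G κ) (s κ))
    (hrK : r K = 0) (hr : ∀ κ : Fin K, r κ = (A κ).adjoint (r (κ + 1)) - G κ)
    (n : ℕ) (hn : n ≤ K) :
    HasGradientAt (costToGo F C n) (-r n) (s n) := by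
  by_cases hnK : n < K
  · have htail : HasGradientAt (costToGo F C (n + 1)) (-r (n + 1)) (F ⟨n, hnK⟩ (s n)) :=
      (hs ⟨n, hnK⟩ : s (n + 1) = _) ▸ hasGradientAt_costToGo hs hF hC hrK hr (n + 1) hnK
    have hstep := (hC ⟨n, hnK⟩).add (htail.comp_hasFDerivAt (hF ⟨n, hnK⟩))
    rw [(hr ⟨n, hnK⟩ : r n = _), funext (costToGo_of_lt hnK)]
    convert hstep using 1
    rw [map_neg]
    abel
  · obtain rfl : n = K := by omega
    rw [hrK, neg_zero, funext (costToGo_of_le le_rfl)]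
    exact hasGradientAt_const _ _
termination_by K - n

end CostToGo

theorem Fin.sum_univ_eq_sum_lt_add_add_sum_gt {M : Type*} [AddCommMonoid M] {K : ℕ} (k : Fin K)
    (h : Fin K → M) :
    ∑ κ, h κ = ∑ κ ∈ univ.filter (· < k), h κ + h k
      + ∑ κ ∈ univ.filter (fun κ : Fin K => (k : ℕ) + 1 ≤ κ), h κ := by
  have hsplit : ∀ κ : Fin K, h κ = ((if κ < k then h κ else 0) + if κ = k then h κ else 0)
      + if (k : ℕ) + 1 ≤ κ then h κ else 0 := by
    intro κ
    have := Fin.ext_iff (a := κ) (b := k)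
    have := Fin.lt_def (a := κ) (b := k)
    split_ifs <;> simp_all <;> omega
  rw [sum_congr rfl fun κ _ => hsplit κ, sum_add_distrib, sum_add_distrib, sum_filter, sum_filter,
    sum_ite_eq']
  simp

section Control

variable {E U : Type*} {K : ℕ} {f : Fin K → E → U → E} {c : Fin K → E → U → ℝ}
  {z : (Fin K → U) → ℕ → E} {z₀ : E}

theorem trajectory_update_eq_of_le (hz0 : ∀ μ, z μ 0 = z₀)
    (hz : ∀ μ (κ : Fin K), z μ (κ + 1) = f κ (z μ κ) (μ κ)) (μ : Fin K → U) (k : Fin K) (m : U) :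
    ∀ n ≤ (k : ℕ), z (Function.update μ k m) n = z μ n
  | 0, _ => by rw [hz0, hz0]
  | n + 1, hn => by
    have hnK : n < K := by omega
    rw [(hz _ ⟨n, hnK⟩ : z _ (n + 1) = _), (hz μ ⟨n, hnK⟩ : z μ (n + 1) = _),
      trajectory_update_eq_of_le hz0 hz μ k m n (by omega),
      Function.update_of_ne (Fin.ne_of_val_ne (by simp; omega))]

theorem sum_cost_update_eq (hz0 : ∀ μ, z μ 0 = z₀)
    (hz : ∀ μ (κ : Fin K), z μ (κ + 1) = f κ (z μ κ) (μ κ)) (μ : Fin K → U) (k : Fin K) (m : U) :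
    ∑ κ, c κ (z (Function.update μ k m) κ) (Function.update μ k m κ)
      = ∑ κ ∈ univ.filter (· < k), c κ (z μ κ) (μ κ)
        + (c k (z μ k) m + costToGo (fun κ w => f κ w (μ κ)) (fun κ w => c κ w (μ κ)) (k + 1)
            (f k (z μ k) m)) := by
  have hpast := trajectory_update_eq_of_le hz0 hz μ k m
  have hfuture : ∀ κ : Fin K, (k : ℕ) + 1 ≤ κ → Function.update μ k m κ = μ κ :=
    fun κ hκ => Function.update_of_ne (Fin.ne_of_val_ne (by omega)) m μ
  have hnext : z (Function.update μ k m) (k + 1) = f k (z μ k) m := by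
    rw [hz, hpast k le_rfl, Function.update_self]
  rw [Fin.sum_univ_eq_sum_lt_add_add_sum_gt k, add_assoc, Function.update_self, hpast k le_rfl,
    ← hnext, costToGo_eq_sum (k + 1) fun κ hκ => by rw [hz, hfuture κ hκ]]
  congr 1
  · refine sum_congr rfl fun κ hκ => ?_
    have hκk : κ < k := (mem_filter.1 hκ).2
    rw [Function.update_of_ne hκk.ne, hpast κ hκk.le]
  · congr 1
    exact sum_congr rfl fun κ hκ => by rw [hfuture κ (mem_filter.1 hκ).2]

variable [NormedAddCommGroup E] [InnerProductSpace ℝ E] [CompleteSpace E]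
  [NormedAddCommGroup U] [InnerProductSpace ℝ U] [CompleteSpace U]

theorem hasGradientAt_sum_cost_update (hz0 : ∀ μ, z μ 0 = z₀)
    (hz : ∀ μ (κ : Fin K), z μ (κ + 1) = f κ (z μ κ) (μ κ)) (μ : Fin K → U)
    {A : Fin K → E →L[ℝ] E} {G : Fin K → E} {r : ℕ → E}
    (hA : ∀ κ, HasFDerivAt (fun w => f κ w (μ κ)) (A κ) (z μ κ))
    (hG : ∀ κ, HasGradientAt (fun w => c κ w (μ κ)) (G κ) (z μ κ))
    (hrK : r K = 0) (hr : ∀ κ : Fin K, r κ = (A κ).adjoint (r (κ + 1)) - G κ)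
    (k : Fin K) {B : U →L[ℝ] E} {gm : U}
    (hB : HasFDerivAt (f k (z μ k)) B (μ k)) (hgm : HasGradientAt (c k (z μ k)) gm (μ k)) :
    HasGradientAt (fun m => ∑ κ, c κ (z (Function.update μ k m) κ) (Function.update μ k m κ))
      (gm - B.adjoint (r (k + 1))) (μ k) := by
  have htail := hasGradientAt_costToGo (hz μ) hA hG hrK hr (k + 1) k.isLt
  rw [hz μ k] at htail
  rw [funext (sum_cost_update_eq (c := c) hz0 hz μ k), sub_eq_add_neg, ← map_neg]
  exact (hgm.add (htail.comp_hasFDerivAt hB)).const_add _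

end Control

section Oscillator

variable {U : Type*} [NormedAddCommGroup U] [InnerProductSpace ℝ U]

local notation "ℝ²" => EuclideanSpace ℝ (Fin 2)

noncomputable def oscillatorDrift (φ : ℝ² → U) (η : ℝ) (w : ℝ²) (m : U) : ℝ² :=
  (WithLp.equiv 2 (Fin 2 → ℝ)).symm ![w 1, ⟪m, φ w⟫ - η * w 0]

noncomputable def runningCost (𝒥 : ℝ² → ℝ) (α : ℝ) (φ : ℝ² → U) (w : ℝ²) (m : U) : ℝ :=
  𝒥 w + α / 2 * ⟪m, φ w⟫ ^ 2

variable {φ : ℝ² → U} {𝒥 : ℝ² → ℝ} {η α : ℝ}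

theorem oscillatorDrift_eq_add_rankOne (w : ℝ²) (m : U) :
    oscillatorDrift φ η w m
      = oscillatorDrift φ η w 0 + rankOne ℝ (EuclideanSpace.single 1 1) (φ w) m := by
  ext i
  fin_cases i <;>
    simp only [oscillatorDrift, WithLp.equiv_symm_apply, Fin.zero_eta, Fin.mk_one,
      Matrix.cons_val_zero, Matrix.cons_val_one, Matrix.cons_val_fin_one, inner_zero_left,
      rankOne_apply, real_inner_comm, PiLp.add_apply, PiLp.smul_apply, PiLp.single_eq_same,
      ne_eq, zero_ne_one, not_false_eq_true, PiLp.single_eq_of_ne, smul_eq_mul] <;>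
    ring

theorem hasFDerivAt_oscillatorDrift_control (w : ℝ²) (m : U) :
    HasFDerivAt (oscillatorDrift φ η w) (rankOne ℝ (EuclideanSpace.single 1 1) (φ w)) m := by
  rw [funext (oscillatorDrift_eq_add_rankOne w)]
  exact (rankOne ℝ _ _).hasFDerivAt.const_add _

theorem differentiable_oscillatorDrift_state (hφ : Differentiable ℝ φ) (m : U) :
    Differentiable ℝ fun w => oscillatorDrift φ η w m := by
  have hcoord : Differentiable ℝ fun w : ℝ² => ![w 1, ⟪m, φ w⟫ - η * w 0] := by
    refine differentiable_pi.2 fun i => ?_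
    have hinner : Differentiable ℝ fun w => ⟪m, φ w⟫ := (differentiable_const m).inner ℝ hφ
    fin_cases i <;>
      simp only [Fin.zero_eta, Fin.mk_one, Matrix.cons_val_zero, Matrix.cons_val_one,
        Matrix.cons_val_fin_one] <;>
      fun_prop
  exact (EuclideanSpace.equiv (Fin 2) ℝ).symm.differentiable.comp hcoord

theorem differentiable_runningCost_state (hφ : Differentiable ℝ φ) (h𝒥 : Differentiable ℝ 𝒥)
    (m : U) : Differentiable ℝ fun w => runningCost 𝒥 α φ w m :=
  h𝒥.add ((((differentiable_const m).inner ℝ hφ).pow 2).const_mul _)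

theorem hasGradientAt_inner_sq [CompleteSpace U] (x y : U) :
    HasGradientAt (fun m => ⟪m, y⟫ ^ 2) ((2 * ⟪x, y⟫) • y) x := by
  have hlin : HasFDerivAt (fun m => ⟪m, y⟫) (toDual ℝ U y) x := by
    rw [show (fun m => ⟪m, y⟫) = toDual ℝ U y from funext fun m => real_inner_comm y m]
    exact (toDual ℝ U y).hasFDerivAt
  rw [hasGradientAt_iff_hasFDerivAt, map_smul]
  simpa using hlin.pow 2

theorem hasGradientAt_sum_runningCost_update [CompleteSpace U] {K : ℕ} {Δt : ℝ}
    (hφ : Differentiable ℝ φ) (h𝒥 : Differentiable ℝ 𝒥)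
    {β : ℕ → ℝ² → ℝ²} (hβ : ∀ κ, Differentiable ℝ (β κ))
    {z : (Fin K → U) → ℕ → ℝ²} {z₀ : ℝ²} (hz0 : ∀ μ, z μ 0 = z₀)
    (hz : ∀ μ (κ : Fin K), z μ (κ + 1)
      = z μ κ + Δt • oscillatorDrift φ η (z μ κ) (μ κ) + β κ (z μ κ))
    (μ : Fin K → U) {r : ℕ → ℝ²} (hrK : r K = 0)
    (hr : ∀ κ : Fin K, r κ = r (κ + 1)
      + Δt • (fderiv ℝ (fun w => oscillatorDrift φ η w (μ κ)) (z μ κ)).adjoint (r (κ + 1))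
      + (fderiv ℝ (β κ) (z μ κ)).adjoint (r (κ + 1))
      - Δt • gradient (fun w => runningCost 𝒥 α φ w (μ κ)) (z μ κ))
    (k : Fin K) :
    HasGradientAt
      (fun m => ∑ κ : Fin K, Δt * runningCost 𝒥 α φ (z (Function.update μ k m) κ)
        (Function.update μ k m κ))
      (Δt • ((α * ⟪φ (z μ k), μ k⟫) • φ (z μ k) - r (k + 1) 1 • φ (z μ k))) (μ k) := by
  have hA : ∀ κ : Fin K, HasFDerivAt (fun w => w + Δt • oscillatorDrift φ η w (μ κ) + β κ w)
      (ContinuousLinearMap.id ℝ ℝ² + Δt • fderiv ℝ (fun w => oscillatorDrift φ η w (μ κ)) (z μ κ)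
        + fderiv ℝ (β κ) (z μ κ)) (z μ κ) := fun κ =>
    ((hasFDerivAt_id _).add
      ((differentiable_oscillatorDrift_state hφ _ _).hasFDerivAt.const_smul Δt)).add
      (hβ κ _).hasFDerivAt
  have hG : ∀ κ : Fin K, HasGradientAt (fun w => Δt * runningCost 𝒥 α φ w (μ κ))
      (Δt • gradient (fun w => runningCost 𝒥 α φ w (μ κ)) (z μ κ)) (z μ κ) := fun κ =>
    ((differentiable_runningCost_state hφ h𝒥 _ _).hasGradientAt).const_mul Δt
  have hB : HasFDerivAt (fun m => z μ k + Δt • oscillatorDrift φ η (z μ k) m + β k (z μ k))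
      (Δt • rankOne ℝ (EuclideanSpace.single 1 1) (φ (z μ k))) (μ k) :=
    (((hasFDerivAt_oscillatorDrift_control _ _).const_smul Δt).const_add _).add_const _
  have hgm : HasGradientAt (fun m => Δt * runningCost 𝒥 α φ (z μ k) m)
      (Δt • ((α / 2) • ((2 * ⟪μ k, φ (z μ k)⟫) • φ (z μ k)))) (μ k) :=
    (((hasGradientAt_inner_sq _ _).const_mul (α / 2)).const_add _).const_mul Δt
  convert hasGradientAt_sum_cost_update
    (f := fun κ w m => w + Δt • oscillatorDrift φ η w m + β κ w)
    (c := fun _ w m => Δt * runningCost 𝒥 α φ w m) hz0 hz μ hA hG hrK ?_ k hB hgm using 1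
  · simp only [real_inner_comm, map_smul, adjoint_rankOne, smul_apply,
      rankOne_apply, EuclideanSpace.inner_single_right, Real.ringHom_apply, one_mul]
    module
  · intro κ
    rw [hr κ]
    simp [ContinuousLinearMap.adjoint_id]

end Oscillator

theorem particle_reduced_gradient_general {L K N : ℕ} (Δt α η : ℝ)
    (φ : EuclideanSpace ℝ (Fin 2) → EuclideanSpace ℝ (Fin L))
    (𝒥 : EuclideanSpace ℝ (Fin 2) → ℝ)
    (hφ : ContDiff ℝ 1 φ) (h𝒥 : ContDiff ℝ 1 𝒥)
    -- the drift and the running cost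
    (a : EuclideanSpace ℝ (Fin 2) → EuclideanSpace ℝ (Fin L) → EuclideanSpace ℝ (Fin 2))
    (ha : a = fun w m =>
      (WithLp.equiv 2 (Fin 2 → ℝ)).symm ![w 1, ⟪m, φ w⟫ - η * w 0])
    (g : EuclideanSpace ℝ (Fin 2) → EuclideanSpace ℝ (Fin L) → ℝ)
    (hg : g = fun w m => 𝒥 w + α / 2 * ⟪m, φ w⟫ ^ 2)
    -- initial states and noise maps of the particles
    (z0 : Fin N → EuclideanSpace ℝ (Fin 2))
    (β : Fin N → ℕ → EuclideanSpace ℝ (Fin 2) → EuclideanSpace ℝ (Fin 2))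
    (hβ : ∀ j κ, ContDiff ℝ 1 (β j κ))
    -- the states, as functions of the control sequence
    (z : (Fin K → EuclideanSpace ℝ (Fin L)) → Fin N → ℕ → EuclideanSpace ℝ (Fin 2))
    (hz0 : ∀ μ j, z μ j 0 = z0 j)
    (hzrec : ∀ μ j, ∀ κ : Fin K,
      z μ j ((κ : ℕ) + 1)
        = z μ j κ + Δt • a (z μ j κ) (μ κ) + β j κ (z μ j κ))
    -- a fixed control and the adjoint states of the particles
    (μ : Fin K → EuclideanSpace ℝ (Fin L))
    (r : Fin N → ℕ → EuclideanSpace ℝ (Fin 2))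
    (hrK : ∀ j, r j K = 0)
    (hrrec : ∀ j, ∀ κ : Fin K,
      r j κ = r j ((κ : ℕ) + 1)
        + Δt • (fderiv ℝ (fun w => a w (μ κ)) (z μ j κ)).adjoint (r j ((κ : ℕ) + 1))
        + (fderiv ℝ (β j κ) (z μ j κ)).adjoint (r j ((κ : ℕ) + 1))
        - Δt • gradient (fun w => g w (μ κ)) (z μ j κ))
    -- the discrete reduced objective
    (Jhat : (Fin K → EuclideanSpace ℝ (Fin L)) → ℝ)
    (hJhat : Jhat = fun μ' => Δt / N * ∑ j : Fin N, ∑ κ : Fin K, g (z μ' j κ) (μ' κ)) :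
    ∀ κ : Fin K,
      gradient (fun m => Jhat (Function.update μ κ m)) (μ κ)
        = (Δt / N) • ∑ j : Fin N,
            ((α * ⟪φ (z μ j κ), μ κ⟫) • φ (z μ j κ)
              - (r j ((κ : ℕ) + 1) 1) • φ (z μ j κ)) := by
  intro k
  obtain rfl : a = oscillatorDrift φ η := ha
  obtain rfl : g = runningCost 𝒥 α φ := hg
  have hparticle := fun j => hasGradientAt_sum_runningCost_update
    (hφ.differentiable one_ne_zero) (h𝒥.differentiable one_ne_zero)
    (fun κ => (hβ j κ).differentiable one_ne_zero) (hz0 · j) (hzrec · j) μ (hrK j) (hrrec j) k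
  have hJ : (fun m => Jhat (Function.update μ k m)) = fun m => (N : ℝ)⁻¹ * ∑ j, ∑ κ : Fin K,
      Δt * runningCost 𝒥 α φ (z (Function.update μ k m) j κ) (Function.update μ k m κ) := by
    subst hJhat
    funext m
    simp only [← mul_sum]
    ring
  rw [hJ, ((HasGradientAt.fun_sum univ fun j _ => hparticle j).const_mul _).gradient, ← smul_sum,
    smul_smul, inv_mul_eq_div]

/-- reduced gradient of the discrete objective for the
particle system. Phase-space states `z = (x,v) ∈ ℝ²`, drift
`a((x,v),μ) = (v, ⟨μ, φ(x,v)⟩ − ηx)`, running cost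
`g(z,μ) = 𝒥(z) + (α/2)⟨μ, φ(z)⟩²`; each particle `j` follows the Euler
recursion with noise maps `β_j^κ`, and its adjoint states
`r_j^κ = (q_j^κ, p_j^κ)` follow the backward adjoint recursion. With
`Jhat(μ) = (Δt/N)·Σ_j Σ_κ g(z_j^κ(μ), μ^κ)`, the reduced gradient is
`∇_{μ^κ} Jhat(μ) = (Δt/N)·Σ_j [α⟨φ(z_j^κ), μ^κ⟩·φ(z_j^κ) − p_j^{κ+1}·φ(z_j^κ)]`. -/
theorem particle_reduced_gradient {L K N : ℕ} (Δt α η : ℝ) (hΔt : 0 < Δt)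
    (hα : 0 < α) (hN : 0 < N)
    (φ : EuclideanSpace ℝ (Fin 2) → EuclideanSpace ℝ (Fin L))
    (𝒥 : EuclideanSpace ℝ (Fin 2) → ℝ)
    (hφ : ContDiff ℝ 1 φ) (h𝒥 : ContDiff ℝ 1 𝒥)
    -- the drift and the running cost
    (a : EuclideanSpace ℝ (Fin 2) → EuclideanSpace ℝ (Fin L) → EuclideanSpace ℝ (Fin 2))
    (ha : a = fun w m =>
      (WithLp.equiv 2 (Fin 2 → ℝ)).symm ![w 1, ⟪m, φ w⟫ - η * w 0])
    (g : EuclideanSpace ℝ (Fin 2) → EuclideanSpace ℝ (Fin L) → ℝ)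
    (hg : g = fun w m => 𝒥 w + α / 2 * ⟪m, φ w⟫ ^ 2)
    -- initial states and noise maps of the particles
    (z0 : Fin N → EuclideanSpace ℝ (Fin 2))
    (β : Fin N → ℕ → EuclideanSpace ℝ (Fin 2) → EuclideanSpace ℝ (Fin 2))
    (hβ : ∀ j κ, ContDiff ℝ 1 (β j κ))
    -- the states, as functions of the control sequence
    (z : (Fin K → EuclideanSpace ℝ (Fin L)) → Fin N → ℕ → EuclideanSpace ℝ (Fin 2))
    (hz0 : ∀ μ j, z μ j 0 = z0 j)
    (hzrec : ∀ μ j, ∀ κ : Fin K,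
      z μ j ((κ : ℕ) + 1)
        = z μ j κ + Δt • a (z μ j κ) (μ κ) + β j κ (z μ j κ))
    -- a fixed control and the adjoint states of the particles
    (μ : Fin K → EuclideanSpace ℝ (Fin L))
    (r : Fin N → ℕ → EuclideanSpace ℝ (Fin 2))
    (hrK : ∀ j, r j K = 0)
    (hrrec : ∀ j, ∀ κ : Fin K,
      r j κ = r j ((κ : ℕ) + 1)
        + Δt • (fderiv ℝ (fun w => a w (μ κ)) (z μ j κ)).adjoint (r j ((κ : ℕ) + 1))
        + (fderiv ℝ (β j κ) (z μ j κ)).adjoint (r j ((κ : ℕ) + 1))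
        - Δt • gradient (fun w => g w (μ κ)) (z μ j κ))
    -- the discrete reduced objective
    (Jhat : (Fin K → EuclideanSpace ℝ (Fin L)) → ℝ)
    (hJhat : Jhat = fun μ' => Δt / N * ∑ j : Fin N, ∑ κ : Fin K, g (z μ' j κ) (μ' κ)) :
    ∀ κ : Fin K,
      gradient (fun m => Jhat (Function.update μ κ m)) (μ κ)
        = (Δt / N) • ∑ j : Fin N,
            ((α * ⟪φ (z μ j κ), μ κ⟫) • φ (z μ j κ)
              - (r j ((κ : ℕ) + 1) 1) • φ (z μ j κ)) :=
  particle_reduced_gradient_general Δt α η φ 𝒥 hφ h𝒥 a ha g hg z0 β hβ z hz0 hzrec μ r hrK hrrec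
    Jhat hJhat
end
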